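/- Let p ≥ 5 be a prime, let e be an odd positive integer, set q = p^e, and let N be a natural number such that (N − (1+q))² ≤ 4q as integers (equivalently |N − (1+q)| ≤ 2√q). Then N ≡ 1 (mod p^{(e+1)/2}) if and only if N = 1 + q. -/
import Mathlib


/-- For a prime `p ≥ 5`, an odd positive integer `e`, `q = p^e`, and a natural number `N`
with `(N - (1+q))² ≤ 4q`, we have `N ≡ 1 mod p^((e+1)/2)` iff `N = 1 + q`. -/
theorem stmt_2 (p : ℕ) (hp : p.Prime) (hp5 : 5 ≤ p) (e : ℕ) (he : 0 < e) (heo : Odd e)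
    (q : ℕ) (hq : q = p ^ e) (N : ℕ)
    (hN : ((N : ℤ) - (1 + q)) ^ 2 ≤ 4 * q) :
    N ≡ 1 [MOD p ^ ((e + 1) / 2)] ↔ N = 1 + q := by
  set k := (e + 1) / 2 with hk
  have hkle : k ≤ e := by omega
  have hmq : (p : ℤ) ^ k ∣ (q : ℤ) := by
    rw [hq]; push_cast; exact pow_dvd_pow _ hkle
  constructor
  · intro h
    have h' : (N : ℤ) ≡ 1 [ZMOD (p : ℤ) ^ k] := by
      have := Int.natCast_modEq_iff.mpr h
      simpa using this
    have hdvd : (p : ℤ) ^ k ∣ (N : ℤ) - (1 + q) := by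
      have h1 : (p : ℤ) ^ k ∣ (N : ℤ) - 1 := Int.ModEq.dvd h'.symm
      have := h1.sub hmq
      simpa [sub_sub] using this
    -- show |N - (1+q)| < p^k via squares
    have hlt : ((N : ℤ) - (1 + q)) ^ 2 < ((p : ℤ) ^ k) ^ 2 := by
      have h2 : ((p : ℤ) ^ k) ^ 2 = (p : ℤ) ^ (2 * k) := by rw [← pow_mul, mul_comm]
      obtain ⟨t, ht⟩ := heo
      have h2k : 2 * k = e + 1 := by omega
      have : (4 : ℤ) * q < (p : ℤ) ^ (e + 1) := by
        rw [hq, pow_succ]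
        push_cast
        have hq0 : (0 : ℤ) < (p : ℤ) ^ e := by positivity
        calc (4 : ℤ) * (p:ℤ) ^ e < 5 * (p:ℤ) ^ e := by nlinarith
          _ ≤ (p:ℤ) ^ e * p := by
              rw [mul_comm]
              exact mul_le_mul_of_nonneg_left (by exact_mod_cast hp5) (le_of_lt hq0)
      rw [h2, h2k]
      exact lt_of_le_of_lt hN this
    have habs : |(N : ℤ) - (1 + q)| < (p : ℤ) ^ k :=
      abs_lt_of_sq_lt_sq hlt (by positivity)
    have hz : (N : ℤ) - (1 + q) = 0 := Int.eq_zero_of_abs_lt_dvd hdvd habs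
    have : (N : ℤ) = 1 + q := by linarith
    exact_mod_cast this
  · intro h
    subst h hq
    have : p ^ k ∣ (1 + p ^ e) - 1 := by
      simpa using pow_dvd_pow p hkle
    exact ((Nat.modEq_iff_dvd' (by omega)).mpr this).symm
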